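/- Let Z be a zero forcing set of A ∈ F^{n×n} with |Z| = k and terminal set T, and let B = (RA)_{T,Z} be the core matrix, where R(b) = b − A·Forcing(A,Z,b). If A is invertible, then B is invertible. -/

import Mathlib

open Matrix

section ZeroForcing

variable {V : Type*}

/-- The blue-coloring closure of the zero forcing process on a directed graph with
edge relation `E`, starting from the initially blue set `Z`:  a blue vertex `u` all of
whose out-neighbors except `v` are already blue forces `v` to become blue. -/
inductive Blue (E : V → V → Prop) (Z : Set V) : V → Prop
  | init {v : V} : v ∈ Z → Blue E Z v
  | force {u v : V} : Blue E Z u → E u v →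
      (∀ w, E u w → w ≠ v → Blue E Z w) → Blue E Z v

/-- `Z` is a zero forcing set if the forcing process colors every vertex blue. -/
def IsZeroForcingSet (E : V → V → Prop) (Z : Set V) : Prop := ∀ v, Blue E Z v

end ZeroForcing

section ForcingAlg

variable {F : Type*} [Field F] {n : ℕ}

/-- The off-diagonal adjacency pattern of a matrix: `u → v` iff `u ≠ v` and `A u v ≠ 0`. -/
def adjOf (A : Matrix (Fin n) (Fin n) F) (u v : Fin n) : Prop := u ≠ v ∧ A u v ≠ 0

/-- A chronological list of forces for the zero forcing set `Z` of `A`:  `π` lists the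
vertices outside `Z` in the order they are forced, and `par u` is the forcing parent of
`u` (the vertex that forces `u`). -/
structure ForcingOrder (A : Matrix (Fin n) (Fin n) F) (Z : Finset (Fin n)) where
  π : List (Fin n)
  par : Fin n → Fin n
  nodup : π.Nodup
  mem_iff : ∀ v, v ∈ π ↔ v ∉ Z
  par_ne_self : ∀ u ∈ π, par u ≠ u
  par_edge : ∀ u ∈ π, A (par u) u ≠ 0
  par_blue : ∀ u ∈ π, par u ∈ Z ∨ (par u ∈ π ∧ π.idxOf (par u) < π.idxOf u)
  others_blue : ∀ u ∈ π, ∀ w, w ≠ par u → w ≠ u → A (par u) w ≠ 0 →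
      (w ∈ Z ∨ (w ∈ π ∧ π.idxOf w < π.idxOf u))
  par_inj : ∀ u ∈ π, ∀ v ∈ π, par u = par v → u = v

/-- One step of the forcing algorithm: `x_u ← (b_{u↑} − A_{u↑,*} x) / A_{u↑,u}`. -/
def forcingStep (A : Matrix (Fin n) (Fin n) F) (par : Fin n → Fin n)
    (b : Fin n → F) (x : Fin n → F) (u : Fin n) : Fin n → F :=
  Function.update x u ((b (par u) - A (par u) ⬝ᵥ x) / A (par u) u)

/-- The forcing algorithm `Forcing(A, Z, b)`: starting from `x = 0`, iterate the forcing
update over the vertices outside `Z` in forcing order. -/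
def Forcing (A : Matrix (Fin n) (Fin n) F) {Z : Finset (Fin n)}
    (fo : ForcingOrder A Z) (b : Fin n → F) : Fin n → F :=
  fo.π.foldl (forcingStep A fo.par b) 0

/-- The map `R(b) = b − A · Forcing(A, Z, b)`. -/
def Rmap (A : Matrix (Fin n) (Fin n) F) {Z : Finset (Fin n)}
    (fo : ForcingOrder A Z) (b : Fin n → F) : Fin n → F :=
  b - A.mulVec (Forcing A fo b)

/-- A vertex is a terminal if it has no forcing child. -/
def IsTerminal {A : Matrix (Fin n) (Fin n) F} {Z : Finset (Fin n)}
    (fo : ForcingOrder A Z) (v : Fin n) : Prop :=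
  ∀ u ∈ fo.π, fo.par u ≠ v

instance {A : Matrix (Fin n) (Fin n) F} {Z : Finset (Fin n)} (fo : ForcingOrder A Z) :
    DecidablePred (IsTerminal fo) := fun v =>
  decidable_of_iff (∀ u ∈ fo.π, fo.par u ≠ v) Iff.rfl

/-- The core matrix `B = (R A)_{T,Z}`: its column indexed by `z ∈ Z` is `(R a_z)_T`,
where `a_z` is the `z`-th column of `A` and `T` is the terminal set. -/
def coreMatrix (A : Matrix (Fin n) (Fin n) F) {Z : Finset (Fin n)}
    (fo : ForcingOrder A Z) :
    Matrix {v // IsTerminal fo v} {v // v ∈ Z} F :=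
  Matrix.of fun t z => Rmap A fo (fun i => A i z.1) t.1

end ForcingAlg

/-!
Forcing computes, for every `b`, an `x` with `x_Z = 0` that satisfies every equation of
`A x = b` indexed by a forcing parent, so the residual `R b = b - A x` is supported on the
terminal set `T`, and `R` is linear. If `B y = 0`, take `x` to be `y` extended by zero and
`b = A x`: then `(R b)_T = B y = 0`, so `R b = 0`, i.e. `A x = A · Forcing(A, Z, b)`. As `A`
is invertible, `x = Forcing(A, Z, b)`, which vanishes on `Z`; hence `y = 0`. Finally `|T| = |Z|`
since forcing parents are distinct, so the injective square matrix `B` is invertible.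
-/

lemma Matrix.dotProduct_update {ι R : Type*} [Fintype ι] [DecidableEq ι] [CommRing R]
    (r x : ι → R) (u : ι) (a : R) :
    r ⬝ᵥ Function.update x u a = r ⬝ᵥ x - r u * x u + r u * a := by
  rw [Pi.update_eq_sub_add_single, dotProduct_add, dotProduct_sub, dotProduct_single,
    dotProduct_single]

lemma Matrix.mulVec_extend_subtype_val {ι κ R : Type*} [Fintype κ] [CommRing R]
    (A : Matrix ι κ R) (s : Finset κ) (y : s → R) :
    A *ᵥ Function.extend Subtype.val y 0 = ∑ z : s, y z • fun i => A i z := by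
  ext i
  simp only [mulVec, dotProduct, Finset.sum_apply, Pi.smul_apply, smul_eq_mul]
  refine (Fintype.sum_of_injective _ Subtype.val_injective _ _ (fun j hj => ?_) fun z => ?_).symm
  · rw [Function.extend_apply' _ _ _ hj, Pi.zero_apply, mul_zero]
  · rw [Subtype.val_injective.extend_apply, mul_comm]

section ForcingStep

variable {F : Type*} [Field F] {n : ℕ} (A : Matrix (Fin n) (Fin n) F) (par : Fin n → Fin n)

lemma foldl_forcingStep_apply_of_notMem (b x : Fin n → F) {l : List (Fin n)} {i : Fin n}
    (hi : i ∉ l) : l.foldl (forcingStep A par b) x i = x i := by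
  induction l generalizing x with
  | nil => rfl
  | cons u l ih =>
    rw [List.mem_cons, not_or] at hi
    rw [List.foldl_cons, ih _ hi.2, forcingStep, Function.update_of_ne hi.1]

lemma dotProduct_foldl_forcingStep_of_forall_eq_zero (b x r : Fin n → F) {l : List (Fin n)}
    (hr : ∀ w ∈ l, r w = 0) : r ⬝ᵥ l.foldl (forcingStep A par b) x = r ⬝ᵥ x := by
  induction l generalizing x with
  | nil => rfl
  | cons u l ih =>
    rw [List.foldl_cons, ih _ fun w hw => hr w (List.mem_cons_of_mem _ hw), forcingStep,
      dotProduct_update, hr u List.mem_cons_self]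
    ring

lemma foldl_forcingStep_add (b c x y : Fin n → F) (l : List (Fin n)) :
    l.foldl (forcingStep A par (b + c)) (x + y) =
      l.foldl (forcingStep A par b) x + l.foldl (forcingStep A par c) y := by
  induction l generalizing x y with
  | nil => rfl
  | cons u l ih =>
    simp only [List.foldl_cons, ← ih, forcingStep, Function.update_add, Pi.add_apply,
      dotProduct_add, add_sub_add_comm, add_div]

lemma foldl_forcingStep_smul (s : F) (b x : Fin n → F) (l : List (Fin n)) :
    l.foldl (forcingStep A par (s • b)) (s • x) = s • l.foldl (forcingStep A par b) x := by
  induction l generalizing x with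
  | nil => rfl
  | cons u l ih =>
    rw [List.foldl_cons, List.foldl_cons, ← ih, forcingStep, forcingStep,
      ← Function.update_smul]
    simp only [Pi.smul_apply, dotProduct_smul, smul_eq_mul, ← mul_sub, mul_div_assoc]

end ForcingStep

namespace ForcingOrder

variable {F : Type*} [Field F] {n : ℕ} {A : Matrix (Fin n) (Fin n) F} {Z : Finset (Fin n)}
  (fo : ForcingOrder A Z)

def forcingLinearMap : (Fin n → F) →ₗ[F] Fin n → F where
  toFun := Forcing A fo
  map_add' b c := by simpa [Forcing] using foldl_forcingStep_add A fo.par b c 0 0 fo.π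
  map_smul' s b := by simpa [Forcing] using foldl_forcingStep_smul A fo.par s b 0 fo.π

def rmapLinearMap : (Fin n → F) →ₗ[F] Fin n → F :=
  LinearMap.id - A.mulVecLin ∘ₗ fo.forcingLinearMap

lemma rmapLinearMap_apply (b : Fin n → F) : fo.rmapLinearMap b = Rmap A fo b := rfl

lemma forcing_apply_of_mem (b : Fin n → F) {i : Fin n} (hi : i ∈ Z) : Forcing A fo b i = 0 :=
  foldl_forcingStep_apply_of_notMem A fo.par b 0 fun h => (fo.mem_iff i).mp h hi

lemma apply_par_eq_zero_of_idxOf_lt {u w : Fin n} (hu : u ∈ fo.π) (hw : w ∈ fo.π)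
    (hlt : fo.π.idxOf u < fo.π.idxOf w) : A (fo.par u) w = 0 := by
  have hwZ : w ∉ Z := (fo.mem_iff w).mp hw
  have hwu : w ≠ u := by rintro rfl; exact hlt.false
  have hwpar : w ≠ fo.par u := by
    rintro rfl
    rcases fo.par_blue u hu with h | ⟨_, h⟩
    · exact hwZ h
    · omega
  by_contra hne
  rcases fo.others_blue u hu w hwpar hwu hne with h | ⟨_, h⟩
  · exact hwZ h
  · omega

/-- The force at `u` solves this equation, and no later update touches the support of the row. -/
lemma dotProduct_forcing_row_par (b : Fin n → F) {u : Fin n} (hu : u ∈ fo.π) :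
    A (fo.par u) ⬝ᵥ Forcing A fo b = b (fo.par u) := by
  obtain ⟨l₁, l₂, hπ⟩ := List.append_of_mem hu
  have hnd := fo.nodup
  rw [hπ, List.nodup_append', List.nodup_cons] at hnd
  obtain ⟨-, ⟨hu₂, -⟩, hdisj⟩ := hnd
  have hu₁ : u ∉ l₁ := fun h => hdisj h List.mem_cons_self
  have hlater : ∀ w ∈ l₂, A (fo.par u) w = 0 := by
    intro w hw
    have hw₁ : w ∉ l₁ := fun h => hdisj h (List.mem_cons_of_mem _ hw)
    have hwu : w ≠ u := by rintro rfl; exact hu₂ hw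
    refine fo.apply_par_eq_zero_of_idxOf_lt hu ?_ ?_
    · rw [hπ]; exact List.mem_append_right _ (List.mem_cons_of_mem _ hw)
    · rw [hπ, List.idxOf_append_of_notMem hu₁, List.idxOf_append_of_notMem hw₁,
        List.idxOf_cons_self, List.idxOf_cons_ne _ fun h => hwu h.symm]
      omega
  rw [Forcing, hπ, List.foldl_append, List.foldl_cons,
    dotProduct_foldl_forcingStep_of_forall_eq_zero _ _ _ _ _ hlater, forcingStep,
    dotProduct_update, foldl_forcingStep_apply_of_notMem _ _ _ _ hu₁, Pi.zero_apply, mul_zero,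
    mul_div_cancel₀ _ (fo.par_edge u hu)]
  ring

lemma rmap_apply_of_not_isTerminal (b : Fin n → F) {v : Fin n} (hv : ¬IsTerminal fo v) :
    Rmap A fo b v = 0 := by
  obtain ⟨u, hu, rfl⟩ : ∃ u ∈ fo.π, fo.par u = v := by simpa [IsTerminal] using hv
  rw [Rmap, Pi.sub_apply, mulVec, fo.dotProduct_forcing_row_par b hu, sub_self]

lemma card_isTerminal : Fintype.card {v // IsTerminal fo v} = Fintype.card Z := by
  classical
  have hT : Finset.univ.filter (IsTerminal fo) = (fo.π.toFinset.image fo.par)ᶜ := by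
    ext v
    simp [IsTerminal]
  have hπ : fo.π.toFinset = Zᶜ := by
    ext v
    simp [fo.mem_iff]
  have hpar : (fo.π.toFinset.image fo.par).card = fo.π.toFinset.card :=
    Finset.card_image_of_injOn fun u hu v hv => by
      simp only [Finset.mem_coe, List.mem_toFinset] at hu hv
      exact fo.par_inj u hu v hv
  have hZ : Z.card ≤ n := by simpa using Finset.card_le_univ Z
  rw [Fintype.card_subtype, hT, Finset.card_compl, hpar, hπ, Finset.card_compl,
    Fintype.card_coe, Fintype.card_fin]
  omega

lemma coreMatrix_mulVec_apply (y : Z → F) (t : {v // IsTerminal fo v}) :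
    (coreMatrix A fo *ᵥ y) t = Rmap A fo (A *ᵥ Function.extend Subtype.val y 0) t := by
  rw [mulVec_extend_subtype_val, ← rmapLinearMap_apply, map_sum]
  simp [mulVec, dotProduct, coreMatrix, rmapLinearMap_apply, mul_comm]

lemma coreMatrix_mulVec_injective (hA : IsUnit A) :
    Function.Injective (coreMatrix A fo).mulVec := by
  refine (injective_iff_map_eq_zero (coreMatrix A fo).mulVecLin).2 fun y hy => ?_
  set x := Function.extend Subtype.val y 0
  have hR : Rmap A fo (A *ᵥ x) = 0 := by
    ext v
    by_cases hv : IsTerminal fo v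
    · rw [← fo.coreMatrix_mulVec_apply y ⟨v, hv⟩]
      exact congrFun hy ⟨v, hv⟩
    · exact fo.rmap_apply_of_not_isTerminal _ hv
  have hx : x = Forcing A fo (A *ᵥ x) :=
    mulVec_injective_iff_isUnit.2 hA (sub_eq_zero.1 hR)
  ext z
  calc y z = x z := (Subtype.val_injective.extend_apply y 0 z).symm
    _ = Forcing A fo (A *ᵥ x) z := congrFun hx z
    _ = 0 := fo.forcing_apply_of_mem _ z.2

end ForcingOrder

theorem stmt17_general {F : Type*} [Field F] {n : ℕ} (A : Matrix (Fin n) (Fin n) F)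
    (Z : Finset (Fin n))
    (fo : ForcingOrder A Z) (hA : IsUnit A) :
    Function.Bijective (coreMatrix A fo).mulVec := by
  have hinj := fo.coreMatrix_mulVec_injective hA
  have hdim : Module.finrank F (Z → F) = Module.finrank F ({v // IsTerminal fo v} → F) := by
    simp only [Module.finrank_fintype_fun_eq_card, fo.card_isTerminal]
  exact ⟨hinj, (LinearMap.injective_iff_surjective_of_finrank_eq_finrank
    (f := (coreMatrix A fo).mulVecLin) hdim).1 hinj⟩

/-- if `A` is invertible, then the core matrix `B = (R A)_{T,Z}` is
invertible (its multiplication map `F^Z → F^T` is a bijection). -/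
theorem stmt17 {F : Type*} [Field F] {n : ℕ} (A : Matrix (Fin n) (Fin n) F)
    (Z : Finset (Fin n)) (hZ : IsZeroForcingSet (adjOf A) ↑Z)
    (fo : ForcingOrder A Z) (hA : IsUnit A) :
    Function.Bijective (coreMatrix A fo).mulVec :=
  stmt17_general A Z fo hA
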